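/- Fix k ≥ 2 and 0 ≤ a ≤ k-1. For all n ≥ 0 and 0 ≤ m ≤ n, the number of generalized k-Dyck paths of depth a, semilength n, and semiheight m equals the number of (α,β)-colored order-(k-1) Motzkin paths of length n and height m, where α_i = C(k,i+1) - C(k-a-1,i+1) and β_i = C(k,i+1) for 0 ≤ i ≤ k-2. -/

import Mathlib

open Finset PowerSeries

/-- The validity condition for a single step `(s, c)` (vertical displacement `s`, color `c`)
of an `(α,β)`-colored order-`ℓ` Motzkin path, where `h` is the height at which the step ends.
Up steps `s = 1` and maximal down steps `D_ℓ` are uncolored (color `0`); a down step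
`D_d = (1,-d)` with `d < ℓ` gets one of `α d` colors if it ends at height `0` and one of
`β d` colors if it ends at positive height. -/
def MotzkinStepOK (ℓ : ℕ) (α β : ℕ → ℕ) (s : ℤ) (c : ℕ) (h : ℤ) : Prop :=
  (s = 1 ∧ c = 0) ∨
  ∃ d : ℕ, d ≤ ℓ ∧ s = -(d : ℤ) ∧
    (if d = ℓ then c = 0 else c < (if h = 0 then α d else β d))

/-- The set of `(α,β)`-colored order-`ℓ` Motzkin paths of length `n` and height `m`,
encoded as lists of (displacement, color) pairs.  The path stays weakly above `y = 0`. -/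
def ColoredMotzkinSet (ℓ : ℕ) (α β : ℕ → ℕ) (n m : ℕ) : Set (List (ℤ × ℕ)) :=
  {L | L.length = n ∧ (L.map Prod.fst).sum = (m : ℤ) ∧
    ∀ i < n, 0 ≤ ((L.take (i + 1)).map Prod.fst).sum ∧
      MotzkinStepOK ℓ α β (L.getD i (0, 0)).1 (L.getD i (0, 0)).2
        (((L.take (i + 1)).map Prod.fst).sum)}

/-- `M ℓ α β n m` is the number of `(α,β)`-colored order-`ℓ` Motzkin paths of
length `n` and height `m`. -/
noncomputable def M (ℓ : ℕ) (α β : ℕ → ℕ) (n m : ℕ) : ℕ :=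
  Nat.card (ColoredMotzkinSet ℓ α β n m)

/-- The set of generalized `k`-Dyck paths of depth `a`, semilength `n` and semiheight `m`:
lattice paths from `(0,0)` to `(k*n, k*m)` using steps `U = (1,1)` and `D_{k-1} = (1,1-k)`
that stay weakly above the line `y = -a`, encoded as lists of vertical displacements. -/
def DyckSet (k a n m : ℕ) : Set (List ℤ) :=
  {L | L.length = k * n ∧ L.sum = (k : ℤ) * m ∧
    (∀ s ∈ L, s = 1 ∨ s = 1 - (k : ℤ)) ∧
    ∀ i, -(a : ℤ) ≤ (L.take i).sum}

/-- `D k a n m` is the number of generalized `k`-Dyck paths of depth `a`,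
semilength `n` and semiheight `m`. -/
noncomputable def D (k a n m : ℕ) : ℕ := Nat.card (DyckSet k a n m)

/-! Both counts satisfy the same transfer-matrix recursion in `n`. Cut a generalized Dyck path
of semilength `n + 1` after its first `k n` steps: the cut height is a multiple `k m'`, and the
last block of `k` steps is determined by the positions of its `j = m' + 1 - m` down steps. Any
`j` positions give a valid block, except that a block ending at height `0` goes below `-a`
exactly when all its down steps lie among its first `k - a - 1` steps. So there are
`C(k,j) - [m = 0] C(k-a-1,j)` blocks, which is also the number of colored Motzkin steps
`D_{j-1}` from height `m'` to height `m`. -/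

section Paths

variable {τ : Type*} (step : τ → ℤ) (ok : τ → ℤ → Prop)

def IsPath : ℤ → List τ → Prop
  | _, [] => True
  | h, x :: L => ok x (h + step x) ∧ IsPath (h + step x) L

def pathSet (N : ℕ) (h₀ h : ℤ) : Set (List τ) :=
  {L | L.length = N ∧ h₀ + (L.map step).sum = h ∧ IsPath step ok h₀ L}

variable {step ok}

theorem isPath_append {h₀ : ℤ} {L₁ L₂ : List τ} :
    IsPath step ok h₀ (L₁ ++ L₂) ↔
      IsPath step ok h₀ L₁ ∧ IsPath step ok (h₀ + (L₁.map step).sum) L₂ := by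
  induction L₁ generalizing h₀ with
  | nil => simp [IsPath]
  | cons x L ih => simp [IsPath, ih, add_assoc, and_assoc]

theorem isPath_iff_getD [Inhabited τ] {h₀ : ℤ} {L : List τ} :
    IsPath step ok h₀ L ↔
      ∀ i < L.length, ok (L.getD i default) (h₀ + ((L.take (i + 1)).map step).sum) := by
  induction L generalizing h₀ with
  | nil => simp [IsPath]
  | cons x L ih =>
    rw [IsPath, ih, List.length_cons, Nat.forall_lt_succ_left]
    simp [add_assoc]

theorem isPath_and_iff {P : τ → Prop} {Q : ℤ → Prop} {h₀ : ℤ} (hQ : Q h₀) {L : List τ} :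
    IsPath step (fun x h => P x ∧ Q h) h₀ L ↔
      (∀ x ∈ L, P x) ∧ ∀ t, Q (h₀ + ((L.take t).map step).sum) := by
  induction L generalizing h₀ with
  | nil => simp [IsPath, hQ]
  | cons x L ih =>
    have hsucc : (∀ t, Q (h₀ + ((List.take t (x :: L)).map step).sum)) ↔
        ∀ t, Q (h₀ + step x + ((L.take t).map step).sum) := by
      refine ⟨fun h t => by simpa [add_assoc] using h (t + 1), fun h t => ?_⟩
      cases t with
      | zero => simpa using hQ
      | succ t => simpa [add_assoc] using h t
    simp only [IsPath, List.forall_mem_cons, hsucc]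
    constructor
    · rintro ⟨⟨hx, hQx⟩, hL⟩
      exact ⟨⟨hx, ((ih hQx).1 hL).1⟩, ((ih hQx).1 hL).2⟩
    · rintro ⟨⟨hx, hL⟩, hQL⟩
      have hQx : Q (h₀ + step x) := by simpa using hQL 0
      exact ⟨⟨hx, hQx⟩, (ih hQx).2 ⟨hL, hQL⟩⟩

theorem IsPath.forall_mem {T : Set τ} (hT : ∀ x h, ok x h → x ∈ T) {h₀ : ℤ} {L : List τ}
    (hL : IsPath step ok h₀ L) : ∀ x ∈ L, x ∈ T := by
  induction L generalizing h₀ with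
  | nil => simp
  | cons x L ih => exact List.forall_mem_cons.2 ⟨hT _ _ hL.1, ih hL.2⟩

theorem IsPath.end_mem {S : Set ℤ} (hS : ∀ x h, ok x h → h ∈ S) {h₀ : ℤ} (h₀S : h₀ ∈ S)
    {L : List τ} (hL : IsPath step ok h₀ L) : h₀ + (L.map step).sum ∈ S := by
  induction L generalizing h₀ with
  | nil => simpa using h₀S
  | cons x L ih => simpa [add_assoc] using ih (hS _ _ hL.1) hL.2

theorem pathSet_finite {T : Set τ} (hT : T.Finite) (hok : ∀ x h, ok x h → x ∈ T)
    (N : ℕ) (h₀ h : ℤ) : (pathSet step ok N h₀ h).Finite := by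
  have := hT.to_subtype
  refine ((List.finite_length_eq T N).image (List.map Subtype.val)).subset ?_
  rintro L ⟨hN, -, hL⟩
  lift L to List T using hL.forall_mem hok
  exact ⟨L, by simpa using hN, rfl⟩

theorem card_pathSet_zero (h₀ h : ℤ) :
    Nat.card (pathSet step ok 0 h₀ h) = if h₀ = h then 1 else 0 := by
  have : pathSet step ok 0 h₀ h = if h₀ = h then {[]} else ∅ := by
    ext L
    split_ifs <;> simp_all [pathSet, IsPath]
  rw [this]
  split_ifs <;> simp

theorem card_pathSet_one (h₀ h : ℤ) :
    Nat.card (pathSet step ok 1 h₀ h) = Nat.card {x | h₀ + step x = h ∧ ok x h} := by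
  have : pathSet step ok 1 h₀ h = (fun x => [x]) '' {x | h₀ + step x = h ∧ ok x h} := by
    ext L
    constructor
    · rintro ⟨hN, hsum, hL⟩
      obtain ⟨x, rfl⟩ := List.length_eq_one_iff.1 hN
      simp only [List.map_cons, List.map_nil, List.sum_singleton] at hsum
      exact ⟨x, ⟨hsum, by simpa [IsPath, hsum] using hL⟩, rfl⟩
    · rintro ⟨x, ⟨hsum, hx⟩, rfl⟩
      exact ⟨rfl, by simpa using hsum, by simpa [IsPath, hsum] using hx⟩
  rw [this, Nat.card_image_of_injective List.singleton_injective]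

theorem mem_pathSet_append_iff {N₁ N₂ : ℕ} {h₀ h : ℤ} {L₁ L₂ : List τ}
    (h₁ : L₁.length = N₁) :
    L₁ ++ L₂ ∈ pathSet step ok (N₁ + N₂) h₀ h ↔
      L₁ ∈ pathSet step ok N₁ h₀ (h₀ + (L₁.map step).sum) ∧
        L₂ ∈ pathSet step ok N₂ (h₀ + (L₁.map step).sum) h := by
  simp only [pathSet, Set.mem_ofPred_eq, List.length_append, isPath_append, List.map_append,
    List.sum_append, h₁, add_assoc, Nat.add_left_cancel_iff, true_and]
  tauto

theorem card_pathSet_add {N₁ N₂ : ℕ} {h₀ h : ℤ} (E : Finset ℤ)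
    (hfin : (pathSet step ok (N₁ + N₂) h₀ h).Finite)
    (hE : ∀ e L₁ L₂, L₁ ∈ pathSet step ok N₁ h₀ e → L₂ ∈ pathSet step ok N₂ e h → e ∈ E) :
    Nat.card (pathSet step ok (N₁ + N₂) h₀ h) =
      ∑ e ∈ E, Nat.card (pathSet step ok N₁ h₀ e) * Nat.card (pathSet step ok N₂ e h) := by
  let glue : (Σ e : E, pathSet step ok N₁ h₀ e × pathSet step ok N₂ e h) →
      pathSet step ok (N₁ + N₂) h₀ h := fun ⟨e, L₁, L₂⟩ =>
    ⟨L₁.1 ++ L₂.1, (mem_pathSet_append_iff L₁.2.1).2 (by rw [L₁.2.2.1]; exact ⟨L₁.2, L₂.2⟩)⟩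
  have glue_bij : Function.Bijective glue := by
    constructor
    · rintro ⟨⟨e, he⟩, ⟨L₁, hL₁⟩, ⟨L₂, hL₂⟩⟩ ⟨⟨e', he'⟩, ⟨L₁', hL₁'⟩, ⟨L₂', hL₂'⟩⟩ hglue
      obtain ⟨rfl, rfl⟩ := List.append_inj (Subtype.ext_iff.1 hglue) (hL₁.1.trans hL₁'.1.symm)
      obtain rfl : e = e' := hL₁.2.1.symm.trans hL₁'.2.1
      rfl
    · rintro ⟨L, hL⟩
      have hsplit := (mem_pathSet_append_iff (L₁ := L.take N₁) (L₂ := L.drop N₁)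
        (List.length_take_of_le (by rw [hL.1]; omega))).1 (by rwa [List.take_append_drop])
      exact ⟨⟨⟨_, hE _ _ _ hsplit.1 hsplit.2⟩, ⟨_, hsplit.1⟩, ⟨_, hsplit.2⟩⟩,
        Subtype.ext (List.take_append_drop _ _)⟩
  have := hfin.to_subtype
  have : Finite (Σ e : E, pathSet step ok N₁ h₀ e × pathSet step ok N₂ e h) :=
    Finite.of_injective glue glue_bij.1
  have (e : E) : Finite (pathSet step ok N₁ h₀ e × pathSet step ok N₂ e h) :=
    Finite.of_injective (Sigma.mk (β := fun e : E =>
      pathSet step ok N₁ h₀ e × pathSet step ok N₂ e h) e) sigma_mk_injective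
  rw [← Nat.card_congr (Equiv.ofBijective glue glue_bij), Nat.card_sigma, ← sum_coe_sort E]
  simp only [Nat.card_prod]

end Paths

section Motzkin

variable {ℓ : ℕ} {α β : ℕ → ℕ}

variable (ℓ α β) in
def motzkinColors (s h : ℤ) : ℕ :=
  if s = 1 ∨ s = -ℓ then 1
  else if -ℓ < s ∧ s ≤ 0 then (if h = 0 then α s.natAbs else β s.natAbs) else 0

theorem motzkinStepOK_iff {s : ℤ} {c : ℕ} {h : ℤ} :
    MotzkinStepOK ℓ α β s c h ↔ c < motzkinColors ℓ α β s h := by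
  unfold MotzkinStepOK motzkinColors
  constructor
  · rintro (⟨rfl, rfl⟩ | ⟨d, hd, rfl, hc⟩)
    · simp
    · split_ifs at hc ⊢ <;> simp_all <;> omega
  · intro hc
    by_cases h1 : s = 1 ∨ s = -ℓ
    · obtain rfl : c = 0 := by simpa [h1] using hc
      rcases h1 with rfl | rfl
      · exact Or.inl ⟨rfl, rfl⟩
      · exact Or.inr ⟨ℓ, le_rfl, rfl, by simp⟩
    by_cases h2 : -ℓ < s ∧ s ≤ 0
    · rw [if_neg h1, if_pos h2] at hc
      exact Or.inr ⟨s.natAbs, by omega, by omega, by rwa [if_neg (by omega)]⟩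
    · simp [h1, h2] at hc

theorem mem_Icc_of_motzkinColors_ne_zero {s h : ℤ} (hs : motzkinColors ℓ α β s h ≠ 0) :
    s ∈ Set.Icc (-(ℓ : ℤ)) 1 := by
  unfold motzkinColors at hs
  split_ifs at hs <;> simp only [Set.mem_Icc] <;> omega

theorem motzkinColors_le_add {s h : ℤ} :
    motzkinColors ℓ α β s h ≤ motzkinColors ℓ α β s 0 + motzkinColors ℓ α β s 1 := by
  unfold motzkinColors
  split_ifs <;> omega

variable (ℓ α β) in
def motzkinOK : ℤ × ℕ → ℤ → Prop := fun x h => 0 ≤ h ∧ MotzkinStepOK ℓ α β x.1 x.2 h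

variable (ℓ α β) in
theorem coloredMotzkinSet_eq_pathSet (n m : ℕ) :
    ColoredMotzkinSet ℓ α β n m = pathSet Prod.fst (motzkinOK ℓ α β) n 0 m := by
  ext L
  simp only [ColoredMotzkinSet, pathSet, isPath_iff_getD, motzkinOK, zero_add,
    Set.mem_ofPred_eq]
  exact and_congr_right fun hn => hn ▸ Iff.rfl

theorem motzkinPathSet_finite (N : ℕ) (h₀ h : ℤ) :
    (pathSet Prod.fst (motzkinOK ℓ α β) N h₀ h).Finite := by
  let B := ∑ s ∈ Icc (-(ℓ : ℤ)) 1, (motzkinColors ℓ α β s 0 + motzkinColors ℓ α β s 1)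
  refine pathSet_finite ((Set.finite_Icc (-(ℓ : ℤ)) 1).prod (Set.finite_Iio B)) ?_ N h₀ h
  rintro ⟨s, c⟩ h' ⟨-, hc⟩
  replace hc : c < motzkinColors ℓ α β s h' := motzkinStepOK_iff.1 hc
  have hs := mem_Icc_of_motzkinColors_ne_zero (by omega : motzkinColors ℓ α β s h' ≠ 0)
  refine ⟨hs, hc.trans_le (motzkinColors_le_add.trans ?_)⟩
  exact single_le_sum (f := fun s => motzkinColors ℓ α β s 0 + motzkinColors ℓ α β s 1)
    (fun _ _ => Nat.zero_le _) (by simpa using hs)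

theorem card_motzkinPathSet_one {h₀ h : ℤ} (hh : 0 ≤ h) :
    Nat.card (pathSet Prod.fst (motzkinOK ℓ α β) 1 h₀ h) = motzkinColors ℓ α β (h - h₀) h := by
  rw [card_pathSet_one]
  have : {x : ℤ × ℕ | h₀ + x.1 = h ∧ motzkinOK ℓ α β x h} =
      (fun c => (h - h₀, c)) '' Set.Iio (motzkinColors ℓ α β (h - h₀) h) := by
    ext ⟨s, c⟩
    simp only [motzkinOK, motzkinStepOK_iff, Set.mem_ofPred_eq, Set.mem_image, Set.mem_Iio,
      Prod.mk.injEq]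
    constructor
    · rintro ⟨rfl, -, hc⟩
      exact ⟨c, by simpa using hc, by ring, rfl⟩
    · rintro ⟨c, hc, rfl, rfl⟩
      exact ⟨by ring, hh, hc⟩
  rw [this, Nat.card_image_of_injective (fun _ _ h => (Prod.mk.inj h).2), ← Finset.coe_Iio,
    Nat.card_coe_set_eq, Set.ncard_coe_finset, Nat.card_Iio]

theorem M_zero (m : ℕ) : M ℓ α β 0 m = if m = 0 then 1 else 0 := by
  rw [M, coloredMotzkinSet_eq_pathSet, card_pathSet_zero]
  simp [eq_comm]

theorem M_succ (n m : ℕ) :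
    M ℓ α β (n + 1) m =
      ∑ m' ∈ range (m + ℓ + 1), M ℓ α β n m' * motzkinColors ℓ α β (m - m') m := by
  have hE (e : ℤ) (L₁ L₂ : List (ℤ × ℕ)) (h₁ : L₁ ∈ pathSet Prod.fst (motzkinOK ℓ α β) n 0 e)
      (h₂ : L₂ ∈ pathSet Prod.fst (motzkinOK ℓ α β) 1 e m) :
      e ∈ (range (m + ℓ + 1)).map Nat.castEmbedding := by
    have he : 0 ≤ e := by
      simpa [h₁.2.1] using h₁.2.2.end_mem (S := Set.Ici 0) (fun _ _ h => h.1) Set.self_mem_Ici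
    have hcard : Nat.card (pathSet Prod.fst (motzkinOK ℓ α β) 1 e m) ≠ 0 :=
      Nat.card_ne_zero.2 ⟨⟨⟨L₂, h₂⟩⟩, (motzkinPathSet_finite 1 e m).to_subtype⟩
    rw [card_motzkinPathSet_one (by positivity)] at hcard
    have := mem_Icc_of_motzkinColors_ne_zero hcard
    simp only [Set.mem_Icc] at this
    simp only [mem_map, mem_range, Nat.castEmbedding_apply]
    exact ⟨e.toNat, by omega, by omega⟩
  rw [M, coloredMotzkinSet_eq_pathSet,
    card_pathSet_add _ (motzkinPathSet_finite _ _ _) hE, sum_map]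
  refine sum_congr rfl fun m' _ => ?_
  rw [M, coloredMotzkinSet_eq_pathSet, Nat.castEmbedding_apply,
    card_motzkinPathSet_one (by positivity)]

end Motzkin

/-- The number of ways to go from height `m'` to height `m` by one colored Motzkin step, and from
`k m'` to `k m` by `k` Dyck steps, of which `m' + 1 - m` go down. -/
def transferCount (k a m' m : ℕ) : ℕ :=
  if m ≤ m' + 1 then k.choose (m' + 1 - m) - if m = 0 then (k - a - 1).choose (m' + 1) else 0
  else 0

theorem motzkinColors_eq_transferCount {k a : ℕ} (hk : k ≠ 0) (m' m : ℕ) :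
    motzkinColors (k - 1) (fun i => k.choose (i + 1) - (k - a - 1).choose (i + 1))
      (fun i => k.choose (i + 1)) (m - m') m = transferCount k a m' m := by
  unfold motzkinColors transferCount
  rcases lt_or_ge (m' + 1) m with hm | hm
  · rw [if_neg (by omega), if_neg (by omega), if_neg (by omega)]
  obtain ⟨j, hj⟩ : ∃ j, m' + 1 = m + j := ⟨m' + 1 - m, by omega⟩
  rw [show (m : ℤ) - m' = 1 - j by omega, if_pos hm, show m' + 1 - m = j by omega]
  rcases Nat.eq_zero_or_pos j with rfl | hj₀
  · rw [if_pos (by simp), if_neg (by omega)]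
    simp
  rcases lt_trichotomy j k with hjk | rfl | hjk
  · rw [if_neg (by omega), if_pos (by omega), show (1 - (j : ℤ)).natAbs = j - 1 by omega]
    simp only [Nat.sub_add_cancel hj₀]
    by_cases hm₀ : m = 0
    · simp [hm₀, show m' + 1 = j by omega]
    · simp [hm₀]
  · rw [if_pos (by omega), Nat.choose_self]
    split_ifs
    · rw [Nat.choose_eq_zero_of_lt (by omega)]
    · rfl
  · rw [if_neg (by omega), if_neg (by omega), Nat.choose_eq_zero_of_lt hjk, Nat.zero_sub]

theorem card_filter_card_eq_not_subset {ι : Type*} [Fintype ι] [DecidableEq ι] (T : Finset ι)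
    (j : ℕ) : #{S : Finset ι | #S = j ∧ ¬S ⊆ T} = (Fintype.card ι).choose j - (#T).choose j := by
  have : univ.filter (fun S : Finset ι => #S = j ∧ ¬S ⊆ T) =
      powersetCard j univ \ powersetCard j T := by
    ext S
    simp only [mem_filter, mem_univ, true_and, mem_sdiff, mem_powersetCard, subset_univ]
    tauto
  rw [this, card_sdiff_of_subset (powersetCard_mono (subset_univ T)), card_powersetCard,
    card_powersetCard, card_univ]

section Dyck

variable {k a : ℕ}

variable (k a) in
def dyckOK : ℤ → ℤ → Prop := fun s h => (s = 1 ∨ s = 1 - (k : ℤ)) ∧ -(a : ℤ) ≤ h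

theorem isPath_dyckOK_iff {h₀ : ℤ} (h₀a : -(a : ℤ) ≤ h₀) {L : List ℤ} :
    IsPath id (dyckOK k a) h₀ L ↔
      (∀ s ∈ L, s = 1 ∨ s = 1 - (k : ℤ)) ∧ ∀ t, -(a : ℤ) ≤ h₀ + (L.take t).sum := by
  unfold dyckOK
  simpa using isPath_and_iff (step := id) (P := fun s : ℤ => s = 1 ∨ s = 1 - (k : ℤ))
    (Q := fun h => -(a : ℤ) ≤ h) h₀a (L := L)

variable (k a) in
theorem dyckSet_eq_pathSet (n m : ℕ) :
    DyckSet k a n m = pathSet id (dyckOK k a) (k * n) 0 (k * m) := by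
  ext L
  simp [DyckSet, pathSet, isPath_dyckOK_iff]

theorem dyckPathSet_finite (N : ℕ) (h₀ h : ℤ) : (pathSet id (dyckOK k a) N h₀ h).Finite :=
  pathSet_finite (Set.toFinite {1, 1 - (k : ℤ)}) (fun _ _ h => h.1) N h₀ h

theorem D_zero (hk : k ≠ 0) (m : ℕ) : D k a 0 m = if m = 0 then 1 else 0 := by
  rw [D, dyckSet_eq_pathSet, mul_zero, card_pathSet_zero]
  simp [eq_comm, hk]

theorem dvd_sum_sub_length {L : List ℤ} (hL : ∀ s ∈ L, s = 1 ∨ s = 1 - (k : ℤ)) :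
    (k : ℤ) ∣ L.sum - L.length := by
  induction L with
  | nil => simp
  | cons s L ih =>
    obtain ⟨hs, hL⟩ := List.forall_mem_cons.1 hL
    have hsplit : (s :: L).sum - (s :: L).length = (L.sum - L.length) + (s - 1) := by
      simp only [List.sum_cons, List.length_cons]
      push_cast
      ring
    rw [hsplit]
    exact dvd_add (ih hL) (by rcases hs with rfl | rfl <;> simp)

theorem dyck_cut_height_eq_mul (ha : a < k) {n m : ℕ} {e : ℤ} {L₁ L₂ : List ℤ}
    (h₁ : L₁ ∈ pathSet id (dyckOK k a) (k * n) 0 e)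
    (h₂ : L₂ ∈ pathSet id (dyckOK k a) k e (k * m)) :
    ∃ q < m + k, e = k * q := by
  obtain ⟨hlen₁, hsum₁, hpath₁⟩ := h₁
  obtain ⟨hlen₂, hsum₂, hpath₂⟩ := h₂
  simp only [List.map_id, zero_add] at hsum₁ hsum₂
  rw [isPath_dyckOK_iff (by simp)] at hpath₁
  have hae : -(a : ℤ) ≤ e := by simpa [hsum₁] using hpath₁.2 L₁.length
  obtain ⟨q, rfl⟩ : (k : ℤ) ∣ e := by
    have := dvd_sum_sub_length hpath₁.1
    rwa [hlen₁, hsum₁, Nat.cast_mul, dvd_sub_left (dvd_mul_right _ _)] at this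
  have hlow : (k : ℤ) • (1 - (k : ℤ)) ≤ L₂.sum := by
    rw [← hlen₂]
    refine List.card_nsmul_le_sum _ _ fun s hs => ?_
    rcases ((isPath_dyckOK_iff hae).1 hpath₂).1 s hs with rfl | rfl <;> omega
  rw [smul_eq_mul] at hlow
  have hk' : (0 : ℤ) < k := by omega
  have hq₀ : 0 ≤ q := by
    by_contra! hq
    nlinarith
  have hq : q < m + k := by
    by_contra! hq
    nlinarith
  exact ⟨q.toNat, by omega, by rw [Int.toNat_of_nonneg hq₀]⟩

variable (k) in
def dyckBlock (S : Finset (Fin k)) : List ℤ :=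
  List.ofFn fun i => if i ∈ S then 1 - (k : ℤ) else 1

theorem sum_take_dyckBlock (S : Finset (Fin k)) (t : ℕ) :
    ((dyckBlock k S).take t).sum = min k t - k * #{i ∈ S | i.val < t} := by
  have (i : Fin k) : (if i ∈ S then 1 - (k : ℤ) else 1) = 1 - k * if i ∈ S then 1 else 0 := by
    split_ifs <;> ring
  simp only [dyckBlock, List.sum_take_ofFn, this, sum_sub_distrib, ← mul_sum, sum_boole,
    sum_const, Fin.card_filter_val_lt, filter_filter, nsmul_eq_mul, mul_one]
  congr 4
  ext i
  simp [and_comm]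

theorem dyckBlock_injective (hk : k ≠ 0) : Function.Injective (dyckBlock k) := by
  intro S S' h
  ext i
  have := congrFun (List.ofFn_injective h) i
  split_ifs at this <;> simp_all; omega

theorem exists_dyckBlock_eq {L : List ℤ} (hL : L.length = k)
    (hs : ∀ s ∈ L, s = 1 ∨ s = 1 - (k : ℤ)) : ∃ S, dyckBlock k S = L := by
  subst hL
  refine ⟨univ.filter fun i : Fin L.length => L[i] = 1 - (L.length : ℤ),
    List.ext_getElem (by simp [dyckBlock]) fun i _ hi => ?_⟩
  have := hs _ (L.getElem_mem hi)
  simp only [dyckBlock, List.getElem_ofFn, mem_filter, mem_univ, true_and]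
  split_ifs with h
  · exact h.symm
  · exact (this.resolve_right h).symm

theorem sum_dyckBlock (S : Finset (Fin k)) : (dyckBlock k S).sum = k - k * #S := by
  rw [← List.take_length (l := dyckBlock k S), sum_take_dyckBlock]
  simp [dyckBlock, filter_true_of_mem]

theorem dyckBlock_heights_iff (ha : a < k) {m' m : ℕ} {S : Finset (Fin k)} (hS : #S + m = m' + 1) :
    (∀ t, -(a : ℤ) ≤ k * m' + ((dyckBlock k S).take t).sum) ↔
      ¬(m = 0 ∧ ∀ i ∈ S, i.val < k - a - 1) := by
  simp only [sum_take_dyckBlock]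
  constructor
  · rintro hgood ⟨rfl, hlow⟩
    have h := hgood (k - a - 1)
    rw [filter_true_of_mem hlow, show #S = m' + 1 by omega, min_eq_right (by omega),
      show ((k - a - 1 : ℕ) : ℤ) = k - a - 1 by omega] at h
    push_cast at h
    linarith
  · intro hgood t
    have hcS : #{i ∈ S | i.val < t} ≤ #S := card_filter_le _ _
    by_cases hcm : #{i ∈ S | i.val < t} ≤ m'
    · have : (k : ℤ) * #{i ∈ S | i.val < t} ≤ k * m' := by gcongr
      have : (0 : ℤ) ≤ (min k t : ℕ) := by positivity
      linarith
    · have hfull : {i ∈ S | i.val < t} = S := eq_of_subset_of_card_le (filter_subset _ _) (by omega)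
      obtain ⟨x, hxS, hx⟩ : ∃ x ∈ S, k - a - 1 ≤ x.val := by
        simp only [not_and, not_forall, not_lt, exists_prop] at hgood
        exact hgood (by omega)
      have hxt : x.val < t := by
        rw [← hfull] at hxS
        exact (mem_filter.1 hxS).2
      have hmin : (k : ℤ) - a ≤ (min k t : ℕ) := by omega
      rw [hfull, show #S = m' + 1 by omega]
      push_cast at hmin ⊢
      linarith

theorem card_filter_eq_transferCount (m' m : ℕ) :
    #{S : Finset (Fin k) | #S + m = m' + 1 ∧ ¬(m = 0 ∧ ∀ i ∈ S, i.val < k - a - 1)} =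
      transferCount k a m' m := by
  unfold transferCount
  split_ifs with hm hm₀
  · subst hm₀
    have := card_filter_card_eq_not_subset {i : Fin k | i.val < k - a - 1} (m' + 1)
    rw [Fintype.card_fin, Fin.card_filter_val_lt, min_eq_right (by omega)] at this
    rw [Nat.sub_zero, ← this]
    congr 1
    ext S
    simp [subset_iff]
  · rw [Nat.sub_zero, show k.choose (m' + 1 - m) =
      #(powersetCard (m' + 1 - m) (univ : Finset (Fin k))) by simp [card_powersetCard]]
    congr 1
    ext S
    simp only [mem_filter, mem_univ, true_and, hm₀, false_and, not_false_eq_true, and_true,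
      mem_powersetCard_univ]
    omega
  · rw [card_eq_zero, filter_eq_empty_iff]
    intro S _ h
    omega

theorem card_dyckPathSet_block (hk : k ≠ 0) (ha : a < k) (m' m : ℕ) :
    Nat.card (pathSet id (dyckOK k a) k (k * m') (k * m)) = transferCount k a m' m := by
  have hk' : (k : ℤ) ≠ 0 := by exact_mod_cast hk
  have hsum {S : Finset (Fin k)} :
      (k : ℤ) * m' + (dyckBlock k S).sum = k * m ↔ #S + m = m' + 1 := by
    rw [sum_dyckBlock]
    constructor
    · intro h
      have : (k : ℤ) * (#S + m) = k * (m' + 1) := by linarith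
      exact_mod_cast mul_left_cancel₀ hk' this
    · intro h
      have : (#S : ℤ) + m = m' + 1 := by exact_mod_cast h
      linear_combination -(k : ℤ) * this
  have hblocks : pathSet id (dyckOK k a) k (k * m') (k * m) = dyckBlock k ''
      {S : Finset (Fin k) | #S + m = m' + 1 ∧ ¬(m = 0 ∧ ∀ i ∈ S, i.val < k - a - 1)} := by
    have ha' : -(a : ℤ) ≤ k * m' := (neg_nonpos.2 (Nat.cast_nonneg a)).trans (by positivity)
    ext L
    simp only [pathSet, List.map_id, isPath_dyckOK_iff ha', Set.mem_ofPred_eq, Set.mem_image]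
    constructor
    · rintro ⟨hlen, hLsum, hsteps, hheights⟩
      obtain ⟨S, rfl⟩ := exists_dyckBlock_eq hlen hsteps
      have hS := hsum.1 hLsum
      exact ⟨S, ⟨hS, (dyckBlock_heights_iff ha hS).1 hheights⟩, rfl⟩
    · rintro ⟨S, ⟨hS, hgood⟩, rfl⟩
      refine ⟨by simp [dyckBlock], hsum.2 hS, fun s hs => ?_, (dyckBlock_heights_iff ha hS).2 hgood⟩
      obtain ⟨i, rfl⟩ := List.mem_ofFn.1 hs
      split_ifs <;> simp
  rw [hblocks, Nat.card_image_of_injective (dyckBlock_injective hk), Set.coe_ofPred,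
    Nat.card_eq_fintype_card, Fintype.card_subtype, card_filter_eq_transferCount]

theorem D_succ (hk : k ≠ 0) (ha : a < k) (n m : ℕ) :
    D k a (n + 1) m = ∑ m' ∈ range (m + k), D k a n m' * transferCount k a m' m := by
  have hE (e : ℤ) (L₁ L₂ : List ℤ) (h₁ : L₁ ∈ pathSet id (dyckOK k a) (k * n) 0 e)
      (h₂ : L₂ ∈ pathSet id (dyckOK k a) k e (k * m)) :
      e ∈ (range (m + k)).image fun q : ℕ => (k : ℤ) * q := by
    obtain ⟨q, hq, rfl⟩ := dyck_cut_height_eq_mul ha h₁ h₂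
    exact mem_image_of_mem _ (mem_range.2 hq)
  rw [D, dyckSet_eq_pathSet, mul_add_one, card_pathSet_add _ (dyckPathSet_finite _ _ _) hE,
    sum_image fun _ _ _ _ h => by simpa [hk] using h]
  refine sum_congr rfl fun m' _ => ?_
  rw [D, dyckSet_eq_pathSet, card_dyckPathSet_block hk ha]

end Dyck

theorem D_eq_M {k a : ℕ} (hk : k ≠ 0) (ha : a < k) : ∀ n m : ℕ,
    D k a n m = M (k - 1) (fun i => k.choose (i + 1) - (k - a - 1).choose (i + 1))
      (fun i => k.choose (i + 1)) n m
  | 0, m => by rw [D_zero hk, M_zero]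
  | n + 1, m => by
    rw [D_succ hk ha, M_succ, add_assoc, Nat.sub_add_cancel (Nat.one_le_iff_ne_zero.2 hk)]
    refine sum_congr rfl fun m' _ => ?_
    rw [D_eq_M hk ha n m', motzkinColors_eq_transferCount hk]

theorem dyck_eq_colored_motzkin_general (k a : ℕ) (hk : 2 ≤ k) (ha : a ≤ k - 1)
    (n m : ℕ) :
    D k a n m =
      M (k - 1) (fun i => k.choose (i + 1) - (k - a - 1).choose (i + 1))
        (fun i => k.choose (i + 1)) n m :=
  D_eq_M (by omega) (by omega) n m

/-- Generalized `k`-Dyck paths of depth `a` are equinumerous with suitably colored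
order-`(k-1)` Motzkin paths. -/
theorem dyck_eq_colored_motzkin (k a : ℕ) (hk : 2 ≤ k) (ha : a ≤ k - 1)
    (n m : ℕ) (hm : m ≤ n) :
    D k a n m =
      M (k - 1) (fun i => k.choose (i + 1) - (k - a - 1).choose (i + 1))
        (fun i => k.choose (i + 1)) n m :=
  dyck_eq_colored_motzkin_general k a hk ha n m
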